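/- Let Σ² be a non-minimal, non-pseudo-umbilical pmc helix surface in M⁴(c)×ℝ with 0 < |T| < 1, c ≠ 0, and suppose H is parallel to N (H ∥ N) on an open connected subset W₀ of Σ². Then on W₀ one has λ₁ = ⟨A_H E₁,E₁⟩ = 0, 4|H|² + c|T|² = 0 (hence c < 0), and the Gaussian curvature satisfies K = c(1−|T|²). -/

import Mathlib

/-! Parallelism `H ∥ N` means `⟨H,N⟩² = |H|²(1 - |T|²)`, a positive constant, so by continuity and
connectedness `⟨H,N⟩` itself is a nonzero constant on `W₀`. Its `E₁`-derivative `-|T|λ₁` then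
vanishes, so `λ₁ = 0`; the `E₁`-derivative of `λ₁` vanishes too, which forces
`4|H|² + c|T|² = 0`, and the Gauss formula becomes `K = -4|H|²(1 - |T|²)/|T|² = c(1 - |T|²)`. -/

open Set

theorem IsPreconnected.eqOn_const_of_sq_eq_const {X 𝕜 : Type*} [TopologicalSpace X] [Field 𝕜]
    [TopologicalSpace 𝕜] [T1Space 𝕜] [ContinuousInv₀ 𝕜] [ContinuousMul 𝕜]
    {S : Set X} {f : X → 𝕜} {a : 𝕜}
    (hS : IsPreconnected S) (hf : ContinuousOn f S) (ha : a ≠ 0) (hsq : ∀ x ∈ S, f x ^ 2 = a)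
    {y : X} (hy : y ∈ S) : EqOn f (fun _ => f y) S := by
  have hfy : f y ≠ 0 := fun h0 => ha (by rw [← hsq y hy, h0, zero_pow two_ne_zero])
  refine hS.eq_of_sq_eq hf continuousOn_const (fun x hx => ?_) (fun _ => hfy) hy rfl
  simp only [Pi.pow_apply, hsq x hx, hsq y hy]

theorem H_parallel_N_consequences_general
    {Point : Type} [TopologicalSpace Point] {TV NV : Type}
    (c : ℝ)
    (g : TV → TV → Point → ℝ) (h : NV → NV → Point → ℝ)
    (D : TV → (Point → ℝ) → Point → ℝ)
    (A : NV → TV → TV)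
    (N H : NV) (K : Point → ℝ)
    -- locality of the derivative
    (Dlocal : ∀ (X : TV) (f : Point → ℝ) (U : Set Point), IsOpen U →
      (∃ r : ℝ, ∀ p ∈ U, f p = r) → ∀ p ∈ U, D X f p = 0)
    -- continuity of `⟨H,N⟩`
    (contHN : Continuous (h H N))
    -- `Σ²` is pmc and non-minimal, with `|H| = nH > 0`
    (nH : ℝ) (nHpos : 0 < nH) (Hnorm : h H H = fun _ => nH ^ 2)
    -- `Σ²` is a helix surface with `0 < |T| = t < 1`, so `|N|² = 1 − t²`
    (t : ℝ) (ht0 : 0 < t) (ht1 : t < 1)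
    (Nnorm : h N N = fun _ => 1 - t ^ 2)
    -- the orthonormal frame `{E₁ = T/|T|, E₂}` diagonalizing `A_H`
    (E1 : TV)
    -- the expression of the Gaussian curvature: `K = 2λ₁ − 4⟨H,N⟩²/|T|²`
    (Kformula : K = fun p => 2 * g (A H E1) E1 p - 4 * (h H N p) ^ 2 / t ^ 2)
    -- the derivatives of `λ₁` and of `⟨H,N⟩`
    (E1lam1 : D E1 (g (A H E1) E1)
        = fun p => (h H N p / t) * (4 * nH ^ 2 + c * t ^ 2 - 4 * g (A H E1) E1 p))
    (E1HN : D E1 (h H N) = fun p => -(t * g (A H E1) E1 p))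
    -- the open connected set `W₀` on which `H ∥ N`
    (W0 : Set Point) (hW0open : IsOpen W0) (hW0conn : IsConnected W0)
    (par : ∀ p ∈ W0, (h H N p) ^ 2 = h H H p * h N N p) :
    (∀ p ∈ W0, g (A H E1) E1 p = 0) ∧
      4 * nH ^ 2 + c * t ^ 2 = 0 ∧
      c < 0 ∧
      (∀ p ∈ W0, K p = c * (1 - t ^ 2)) := by
  have hsq : ∀ p ∈ W0, h H N p ^ 2 = nH ^ 2 * (1 - t ^ 2) := fun p hp => by
    simpa [Hnorm, Nnorm] using par p hp
  have hpos : 0 < nH ^ 2 * (1 - t ^ 2) := mul_pos (pow_pos nHpos 2) (by nlinarith)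
  obtain ⟨p₀, hp₀⟩ := hW0conn.nonempty
  have hconst := hW0conn.isPreconnected.eqOn_const_of_sq_eq_const contHN.continuousOn
    hpos.ne' hsq hp₀
  have hHN₀ : h H N p₀ ≠ 0 := fun h0 => by have := hsq p₀ hp₀; rw [h0] at this; linarith
  have hlam : ∀ p ∈ W0, g (A H E1) E1 p = 0 := fun p hp => by
    have := Dlocal E1 _ W0 hW0open ⟨_, hconst⟩ p hp
    rw [E1HN, neg_eq_zero] at this
    exact (mul_eq_zero.mp this).resolve_left ht0.ne'
  have hnH_c : 4 * nH ^ 2 + c * t ^ 2 = 0 := by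
    have := Dlocal E1 _ W0 hW0open ⟨0, hlam⟩ p₀ hp₀
    simp only [E1lam1, hlam p₀ hp₀, mul_zero, sub_zero] at this
    exact (mul_eq_zero.mp this).resolve_left (div_ne_zero hHN₀ ht0.ne')
  refine ⟨hlam, hnH_c, by nlinarith [pow_pos nHpos 2, pow_pos ht0 2], fun p hp => ?_⟩
  simp only [Kformula, hlam p hp, hsq p hp]
  field_simp
  linear_combination (t ^ 2 - 1) * hnH_c

theorem H_parallel_N_consequences
    {Point : Type} [TopologicalSpace Point] {TV NV : Type}
    [AddCommGroup TV] [Module (Point → ℝ) TV]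
    [AddCommGroup NV] [Module (Point → ℝ) NV]
    (c : ℝ) (hc : c ≠ 0)
    (g : TV → TV → Point → ℝ) (h : NV → NV → Point → ℝ)
    (D : TV → (Point → ℝ) → Point → ℝ)
    (nabla : TV → TV → TV) (nablaP : TV → NV → NV)
    (sff : TV → TV → NV) (A : NV → TV → TV)
    (T : TV) (N H : NV) (K : Point → ℝ)
    -- locality of the derivative
    (Dlocal : ∀ (X : TV) (f : Point → ℝ) (U : Set Point), IsOpen U →
      (∃ r : ℝ, ∀ p ∈ U, f p = r) → ∀ p ∈ U, D X f p = 0)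
    -- continuity of `⟨H,N⟩`
    (contHN : Continuous (h H N))
    -- `Σ²` is pmc and non-minimal, with `|H| = nH > 0`
    (pmc : ∀ X, nablaP X H = 0)
    (nH : ℝ) (nHpos : 0 < nH) (Hnorm : h H H = fun _ => nH ^ 2)
    -- `Σ²` is not pseudo-umbilical, `H` not umbilical on the set considered
    (notPU : ¬ ∀ X, A H X = (h H H) • X)
    (notUmb : ¬ ∃ f : Point → ℝ, ∀ X, A H X = f • X)
    -- `Σ²` is a helix surface with `0 < |T| = t < 1`, so `|N|² = 1 − t²`
    (t : ℝ) (ht0 : 0 < t) (ht1 : t < 1)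
    (helix : g T T = fun _ => t ^ 2)
    (Nnorm : h N N = fun _ => 1 - t ^ 2)
    -- the orthonormal frame `{E₁ = T/|T|, E₂}` diagonalizing `A_H`
    (E1 E2 : TV) (hE1 : T = (fun _ => t : Point → ℝ) • E1)
    (onE1 : g E1 E1 = 1) (onE2 : g E2 E2 = 1) (onE12 : g E1 E2 = 0)
    -- the expression of the Gaussian curvature: `K = 2λ₁ − 4⟨H,N⟩²/|T|²`
    (Kformula : K = fun p => 2 * g (A H E1) E1 p - 4 * (h H N p) ^ 2 / t ^ 2)
    -- the derivatives of `λ₁` and of `⟨H,N⟩`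
    (E1lam1 : D E1 (g (A H E1) E1)
        = fun p => (h H N p / t) * (4 * nH ^ 2 + c * t ^ 2 - 4 * g (A H E1) E1 p))
    (E1HN : D E1 (h H N) = fun p => -(t * g (A H E1) E1 p))
    -- the open connected set `W₀` on which `H ∥ N`
    (W0 : Set Point) (hW0open : IsOpen W0) (hW0conn : IsConnected W0)
    (par : ∀ p ∈ W0, (h H N p) ^ 2 = h H H p * h N N p) :
    (∀ p ∈ W0, g (A H E1) E1 p = 0) ∧
      4 * nH ^ 2 + c * t ^ 2 = 0 ∧
      c < 0 ∧
      (∀ p ∈ W0, K p = c * (1 - t ^ 2)) :=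
  H_parallel_N_consequences_general c g h D A N H K Dlocal contHN nH nHpos Hnorm t ht0 ht1 Nnorm E1
    Kformula E1lam1 E1HN W0 hW0open hW0conn par
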